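/- Boundary inequalities for the posterior mean: assume the boundary condition (A3). Then for every probability vector π with σ(π, 1, u) > 0 and σ(π, Y_u, u) > 0 for u ∈ {1,2}: g'T(π, 1, 2) ≤ g'T(π, 1, 1) and g'T(π, Y_2, 2) ≥ g'T(π, Y_1, 1), where g'T(π, y, u) = Σ_i g_i T(π, y, u)_i. Consequently, if additionally each B(u) is TP2 so that y ↦ g'T(π, y, u) is nondecreasing, then {g'T(π, y, 1) : y ∈ 𝕐_1} is contained in the interval [g'T(π, 1, 2), g'T(π, Y_2, 2)]. -/

import Mathlib

/-!
Each posterior mean `g'T(π, y, u)` is the `g`-weighted mean of the weight vector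
`i ↦ π_i B_{iy}(u)`. Comparing two such weight vectors in the monotone likelihood ratio order
compares the means of every nondecreasing `g`: the difference of the cross-multiplied means is
`½ Σ_{i,j} (g_j - g_i)(a_i b_j - a_j b_i)`, a sum of nonnegative terms. Condition (A3) says that
the boundary columns of `B(1)` and `B(2)` are so ordered, and TP2 says that the columns of a
single kernel are ordered along `y`.
-/

open Finset

/-- One-step normalizer `σ(π, y) = Σ_i π_i B_{iy}`. -/
def nrm1 {X Y : ℕ} (B : Fin X → Fin Y → ℝ) (π : Fin X → ℝ) (y : Fin Y) : ℝ :=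
  ∑ i, π i * B i y

/-- Posterior mean `g'T(π, y) = Σ_i g_i π_i B_{iy} / σ(π, y)`. -/
noncomputable def postMean {X Y : ℕ} (B : Fin X → Fin Y → ℝ) (g : Fin X → ℝ)
    (π : Fin X → ℝ) (y : Fin Y) : ℝ :=
  (∑ i, g i * (π i * B i y)) / nrm1 B π y

section LikelihoodRatio

variable {ι : Type*} [LinearOrder ι]

/-- Monotone likelihood ratio order: `b / a` is nondecreasing, written without division. -/
def LikelihoodRatioLE (a b : ι → ℝ) : Prop :=
  ∀ i j, i ≤ j → a j * b i ≤ a i * b j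

namespace LikelihoodRatioLE

variable {a b : ι → ℝ}

lemma mul_left (h : LikelihoodRatioLE a b) {c : ι → ℝ} (hc : ∀ i, 0 ≤ c i) :
    LikelihoodRatioLE (fun i => c i * a i) (fun i => c i * b i) := fun i j hij => by
  linear_combination mul_le_mul_of_nonneg_left (h i j hij) (mul_nonneg (hc i) (hc j))

lemma sum_mul_sum_le [Fintype ι] (h : LikelihoodRatioLE a b) {g : ι → ℝ} (hg : Monotone g) :
    (∑ i, g i * a i) * ∑ i, b i ≤ (∑ i, g i * b i) * ∑ i, a i := by
  have hdiff : (∑ i, g i * b i) * ∑ i, a i - (∑ i, g i * a i) * ∑ i, b i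
      = ∑ i, ∑ j, (g j - g i) * (a i * b j) := by
    rw [mul_comm, sum_mul_sum, sum_mul_sum, ← sum_sub_distrib]
    refine sum_congr rfl fun i _ => ?_
    rw [← sum_sub_distrib]
    exact sum_congr rfl fun j _ => by ring
  have hswap : ∑ i, ∑ j, (g j - g i) * (a i * b j)
      = ∑ i, ∑ j, (g i - g j) * (a j * b i) := sum_comm
  have hsymm : 0 ≤ ∑ i, ∑ j, ((g j - g i) * (a i * b j) + (g i - g j) * (a j * b i)) := by
    refine sum_nonneg fun i _ => sum_nonneg fun j _ => ?_
    rcases le_total i j with hij | hji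
    · linear_combination mul_nonneg (sub_nonneg.2 (hg hij)) (sub_nonneg.2 (h i j hij))
    · linear_combination mul_nonneg (sub_nonneg.2 (hg hji)) (sub_nonneg.2 (h j i hji))
  simp only [sum_add_distrib, ← hswap] at hsymm
  linarith

lemma mean_le [Fintype ι] (h : LikelihoodRatioLE a b) {g : ι → ℝ} (hg : Monotone g)
    (ha : 0 < ∑ i, a i) (hb : 0 < ∑ i, b i) :
    (∑ i, g i * a i) / ∑ i, a i ≤ (∑ i, g i * b i) / ∑ i, b i :=
  (div_le_div_iff₀ ha hb).2 (h.sum_mul_sum_le hg)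

end LikelihoodRatioLE

end LikelihoodRatio

def TP2 {ι κ : Type*} [LinearOrder ι] [LinearOrder κ] (B : ι → κ → ℝ) : Prop :=
  ∀ (x x' : ι) (y y' : κ), x ≤ x' → y ≤ y' → B x y' * B x' y ≤ B x y * B x' y'

lemma TP2.likelihoodRatioLE {ι κ : Type*} [LinearOrder ι] [LinearOrder κ] {B : ι → κ → ℝ}
    (hB : TP2 B) {y y' : κ} (hy : y ≤ y') :
    LikelihoodRatioLE (fun x => B x y) (fun x => B x y') := fun x x' hx =>
  (mul_comm _ _).trans_le (hB x x' y y' hx hy)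

section PosteriorMean

variable {X Ya Yb : ℕ} {g π : Fin X → ℝ}

lemma postMean_le_postMean (hg : Monotone g) (hπ : ∀ i, 0 ≤ π i)
    {Ba : Fin X → Fin Ya → ℝ} {Bb : Fin X → Fin Yb → ℝ} {ya : Fin Ya} {yb : Fin Yb}
    (ha : 0 < nrm1 Ba π ya) (hb : 0 < nrm1 Bb π yb)
    (h : LikelihoodRatioLE (fun i => Ba i ya) (fun i => Bb i yb)) :
    postMean Ba g π ya ≤ postMean Bb g π yb :=
  (h.mul_left hπ).mean_le hg ha hb

lemma monotone_postMean_of_TP2 (hg : Monotone g) (hπ : ∀ i, 0 ≤ π i)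
    {B : Fin X → Fin Ya → ℝ} (hB : TP2 B) (hσ : ∀ y, 0 < nrm1 B π y) :
    Monotone (postMean B g π) := fun _ _ hy =>
  postMean_le_postMean hg hπ (hσ _) (hσ _) (hB.likelihoodRatioLE hy)

end PosteriorMean

theorem stmt_14_general (X Y₁ Y₂ : ℕ) (hY₁ : 0 < Y₁) (hY₂ : 0 < Y₂)
    (B₁ : Fin X → Fin Y₁ → ℝ) (B₂ : Fin X → Fin Y₂ → ℝ)
    (g : Fin X → ℝ) (hg : StrictMono g)
    -- (A3): boundary conditions
    (hA3a : ∀ x x' : Fin X, x ≤ x' →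
      B₁ x ⟨0, hY₁⟩ * B₂ x' ⟨0, hY₂⟩ ≤ B₂ x ⟨0, hY₂⟩ * B₁ x' ⟨0, hY₁⟩)
    (hA3b : ∀ x x' : Fin X, x ≤ x' →
      B₂ x ⟨Y₂ - 1, Nat.sub_lt hY₂ Nat.one_pos⟩ * B₁ x' ⟨Y₁ - 1, Nat.sub_lt hY₁ Nat.one_pos⟩ ≤
        B₁ x ⟨Y₁ - 1, Nat.sub_lt hY₁ Nat.one_pos⟩ * B₂ x' ⟨Y₂ - 1, Nat.sub_lt hY₂ Nat.one_pos⟩)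
    -- probability vector with positive boundary normalizers
    (π : Fin X → ℝ) (hπnn : ∀ i, 0 ≤ π i)
    (hσ₁a : 0 < nrm1 B₁ π ⟨0, hY₁⟩)
    (hσ₁b : 0 < nrm1 B₁ π ⟨Y₁ - 1, Nat.sub_lt hY₁ Nat.one_pos⟩)
    (hσ₂a : 0 < nrm1 B₂ π ⟨0, hY₂⟩)
    (hσ₂b : 0 < nrm1 B₂ π ⟨Y₂ - 1, Nat.sub_lt hY₂ Nat.one_pos⟩) :
    (postMean B₂ g π ⟨0, hY₂⟩ ≤ postMean B₁ g π ⟨0, hY₁⟩ ∧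
      postMean B₁ g π ⟨Y₁ - 1, Nat.sub_lt hY₁ Nat.one_pos⟩ ≤
        postMean B₂ g π ⟨Y₂ - 1, Nat.sub_lt hY₂ Nat.one_pos⟩) ∧
    ((∀ (x x' : Fin X) (y y' : Fin Y₁), x ≤ x' → y ≤ y' →
        B₁ x y' * B₁ x' y ≤ B₁ x y * B₁ x' y') →
      (∀ (x x' : Fin X) (y y' : Fin Y₂), x ≤ x' → y ≤ y' →
        B₂ x y' * B₂ x' y ≤ B₂ x y * B₂ x' y') →
      (∀ y : Fin Y₁, 0 < nrm1 B₁ π y) → (∀ y : Fin Y₂, 0 < nrm1 B₂ π y) →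
      Monotone (postMean B₁ g π) ∧ Monotone (postMean B₂ g π) ∧
      ∀ y : Fin Y₁, postMean B₁ g π y ∈
        Set.Icc (postMean B₂ g π ⟨0, hY₂⟩)
          (postMean B₂ g π ⟨Y₂ - 1, Nat.sub_lt hY₂ Nat.one_pos⟩)) := by
  have first : postMean B₂ g π ⟨0, hY₂⟩ ≤ postMean B₁ g π ⟨0, hY₁⟩ :=
    postMean_le_postMean hg.monotone hπnn hσ₂a hσ₁a fun i j hij =>
      (mul_comm _ _).trans_le (hA3a i j hij)
  have last : postMean B₁ g π ⟨Y₁ - 1, Nat.sub_lt hY₁ Nat.one_pos⟩ ≤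
      postMean B₂ g π ⟨Y₂ - 1, Nat.sub_lt hY₂ Nat.one_pos⟩ :=
    postMean_le_postMean hg.monotone hπnn hσ₁b hσ₂b fun i j hij =>
      (mul_comm _ _).trans_le (hA3b i j hij)
  refine ⟨⟨first, last⟩, fun hTP₁ hTP₂ hpos₁ hpos₂ => ?_⟩
  have mono₁ := monotone_postMean_of_TP2 hg.monotone hπnn hTP₁ hpos₁
  refine ⟨mono₁, monotone_postMean_of_TP2 hg.monotone hπnn hTP₂ hpos₂, fun y => ⟨?_, ?_⟩⟩
  · exact first.trans (mono₁ (Fin.le_iff_val_le_val.2 (Nat.zero_le _)))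
  · exact (mono₁ (Fin.le_iff_val_le_val.2 (Nat.le_sub_one_of_lt y.isLt))).trans last

/-- **Boundary inequalities for the posterior mean.**  Under the boundary
condition (A3), `g'T(π,1,2) ≤ g'T(π,1,1)` and `g'T(π,Y₂,2) ≥ g'T(π,Y₁,1)`.
Consequently, if additionally both kernels are TP2 (and all normalizers are
positive) then `y ↦ g'T(π,y,u)` is nondecreasing and every posterior mean of
sensor 1 lies in the interval `[g'T(π,1,2), g'T(π,Y₂,2)]`. -/
theorem stmt_14 (X Y₁ Y₂ : ℕ) (hY₁ : 0 < Y₁) (hY₂ : 0 < Y₂)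
    (B₁ : Fin X → Fin Y₁ → ℝ) (B₂ : Fin X → Fin Y₂ → ℝ)
    (hB₁nn : ∀ x y, 0 ≤ B₁ x y) (hB₂nn : ∀ x y, 0 ≤ B₂ x y)
    (hB₁row : ∀ x, ∑ y, B₁ x y = 1) (hB₂row : ∀ x, ∑ y, B₂ x y = 1)
    (g : Fin X → ℝ) (hg : StrictMono g)
    -- (A3): boundary conditions
    (hA3a : ∀ x x' : Fin X, x ≤ x' →
      B₁ x ⟨0, hY₁⟩ * B₂ x' ⟨0, hY₂⟩ ≤ B₂ x ⟨0, hY₂⟩ * B₁ x' ⟨0, hY₁⟩)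
    (hA3b : ∀ x x' : Fin X, x ≤ x' →
      B₂ x ⟨Y₂ - 1, Nat.sub_lt hY₂ Nat.one_pos⟩ * B₁ x' ⟨Y₁ - 1, Nat.sub_lt hY₁ Nat.one_pos⟩ ≤
        B₁ x ⟨Y₁ - 1, Nat.sub_lt hY₁ Nat.one_pos⟩ * B₂ x' ⟨Y₂ - 1, Nat.sub_lt hY₂ Nat.one_pos⟩)
    -- probability vector with positive boundary normalizers
    (π : Fin X → ℝ) (hπnn : ∀ i, 0 ≤ π i) (hπ : ∑ i, π i = 1)
    (hσ₁a : 0 < nrm1 B₁ π ⟨0, hY₁⟩)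
    (hσ₁b : 0 < nrm1 B₁ π ⟨Y₁ - 1, Nat.sub_lt hY₁ Nat.one_pos⟩)
    (hσ₂a : 0 < nrm1 B₂ π ⟨0, hY₂⟩)
    (hσ₂b : 0 < nrm1 B₂ π ⟨Y₂ - 1, Nat.sub_lt hY₂ Nat.one_pos⟩) :
    (postMean B₂ g π ⟨0, hY₂⟩ ≤ postMean B₁ g π ⟨0, hY₁⟩ ∧
      postMean B₁ g π ⟨Y₁ - 1, Nat.sub_lt hY₁ Nat.one_pos⟩ ≤
        postMean B₂ g π ⟨Y₂ - 1, Nat.sub_lt hY₂ Nat.one_pos⟩) ∧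
    ((∀ (x x' : Fin X) (y y' : Fin Y₁), x ≤ x' → y ≤ y' →
        B₁ x y' * B₁ x' y ≤ B₁ x y * B₁ x' y') →
      (∀ (x x' : Fin X) (y y' : Fin Y₂), x ≤ x' → y ≤ y' →
        B₂ x y' * B₂ x' y ≤ B₂ x y * B₂ x' y') →
      (∀ y : Fin Y₁, 0 < nrm1 B₁ π y) → (∀ y : Fin Y₂, 0 < nrm1 B₂ π y) →
      Monotone (postMean B₁ g π) ∧ Monotone (postMean B₂ g π) ∧
      ∀ y : Fin Y₁, postMean B₁ g π y ∈
        Set.Icc (postMean B₂ g π ⟨0, hY₂⟩)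
          (postMean B₂ g π ⟨Y₂ - 1, Nat.sub_lt hY₂ Nat.one_pos⟩)) :=
  stmt_14_general X Y₁ Y₂ hY₁ hY₂ B₁ B₂ g hg hA3a hA3b π hπnn hσ₁a hσ₁b hσ₂a hσ₂b
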